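/- Let f : ℝⁿ → ℝ be convex and differentiable with minimizer X⋆, and let 0 ≤ r < 3. Let X solve 0 = Ẍ + (r/t)Ẋ + ∇f(X) on [t₀,∞) for some t₀ > 0. Define E = t₀^{2r/3}(f(X(t₀)) − f⋆) + (r(3−r)/9) t₀^{2r/3−2}‖X(t₀)−X⋆‖² + (1/2) t₀^{2r/3−2}‖t₀Ẋ(t₀) + (2r/3)(X(t₀)−X⋆)‖². Then for all t ≥ t₀, f(X(t)) − f⋆ ≤ E / t^{2r/3}. -/

import Mathlib

open Filter Set
open scoped RealInnerProductSpace Topology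

/-!
With `α = 2r/3` and `W = t Ẋ + α (X - X⋆)`, the ODE gives `Ẇ = (1 + α - r) Ẋ - t ∇f(X)`.
The energy `E(t) = t^α (f(X) - f⋆) + c t^(α-2) ‖X - X⋆‖² + ½ t^(α-2) ‖W‖²`, `c = r(3-r)/9`,
then satisfies
`Ė = t^(α-3) (α t² (f(X) - f⋆ - ⟪X - X⋆, ∇f(X)⟫) - (2r(3-r)(3+r)/27) ‖X - X⋆‖²)`:
the choices of `α` and `c` are exactly those that cancel the `‖Ẋ‖²` and `⟪X - X⋆, Ẋ⟫` terms.
By convexity `Ė ≤ 0`, so `t^α (f(X t) - f⋆) ≤ E(t) ≤ E(t₀)`.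
-/

lemma hasDerivAt_rpow_mul {φ : ℝ → ℝ} {φ' β s : ℝ} (hs : 0 < s) (hφ : HasDerivAt φ φ' s) :
    HasDerivAt (fun u => u ^ β * φ u) (s ^ (β - 1) * (β * φ s + s * φ')) s := by
  refine ((Real.hasDerivAt_rpow_const (p := β) (Or.inl hs.ne')).mul hφ).congr_deriv ?_
  rw [Real.rpow_sub_one hs.ne']
  field_simp

section

variable {E : Type*} [NormedAddCommGroup E] [InnerProductSpace ℝ E]

lemma HasGradientAt.comp_hasDerivAt [CompleteSpace E] {f : E → ℝ} {g : E} {X : ℝ → E}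
    {X' : E} {s : ℝ} (hf : HasGradientAt f g (X s)) (hX : HasDerivAt X X' s) :
    HasDerivAt (fun u => f (X u)) ⟪g, X'⟫ s := by
  have h := hf.hasFDerivAt.comp_hasDerivAt s hX
  simp only [InnerProductSpace.toDual_apply_apply] at h
  exact h

lemma hasDerivAt_smul_add_smul_sub_of_ode {X X' X'' : ℝ → E} {G xs : E} {a r s : ℝ}
    (hs : s ≠ 0) (hX : HasDerivAt X (X' s) s) (hX' : HasDerivAt X' (X'' s) s)
    (hode : X'' s + (r / s) • X' s + G = 0) :
    HasDerivAt (fun u => u • X' u + a • (X u - xs)) ((1 + a - r) • X' s - s • G) s := by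
  have hX'' : X'' s = -((r / s) • X' s) - G := by
    rw [← sub_eq_zero, ← hode]; abel
  refine (((hasDerivAt_id s).smul hX').add ((hX.sub_const xs).const_smul a)).congr_deriv ?_
  rw [hX'', id, one_smul, smul_sub, smul_neg, smul_smul, mul_div_cancel₀ r hs]
  module

/-- The left side is `(α - 2) Φ + s Φ'` for `E = s^(α-2) Φ`, `α = 2r/3`. -/
lemma agm_energy_deriv_identity (r s F : ℝ) (u v G : E) :
    (2 * r / 3 - 2) * (s ^ 2 * F + r * (3 - r) / 9 * ‖u‖ ^ 2
        + 1 / 2 * ‖s • v + (2 * r / 3) • u‖ ^ 2)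
      + s * (2 * s * F + s ^ 2 * ⟪G, v⟫ + r * (3 - r) / 9 * (2 * ⟪u, v⟫)
        + 1 / 2 * (2 * ⟪s • v + (2 * r / 3) • u, (1 + 2 * r / 3 - r) • v - s • G⟫))
    = 2 * r / 3 * s ^ 2 * (F - ⟪u, G⟫) - 2 * r * (3 - r) * (3 + r) / 27 * ‖u‖ ^ 2 := by
  simp only [← real_inner_self_eq_norm_sq, inner_add_left, inner_add_right, inner_sub_right,
    real_inner_smul_left, real_inner_smul_right, real_inner_comm u v, real_inner_comm G v]
  ring

variable {f : E → ℝ} {g : E → E} {r : ℝ} {xs : E} {X X' X'' : ℝ → E}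

noncomputable def agmEnergy (f : E → ℝ) (r : ℝ) (xs : E) (X X' : ℝ → E) (t : ℝ) : ℝ :=
  t ^ (2 * r / 3) * (f (X t) - f xs)
    + (r * (3 - r) / 9) * t ^ (2 * r / 3 - 2) * ‖X t - xs‖ ^ 2
    + (1 / 2) * t ^ (2 * r / 3 - 2) * ‖t • X' t + (2 * r / 3) • (X t - xs)‖ ^ 2

lemma agmEnergy_eq_rpow_mul {t : ℝ} (ht : 0 < t) :
    agmEnergy f r xs X X' t = t ^ (2 * r / 3 - 2) * (t ^ 2 * (f (X t) - f xs)
      + r * (3 - r) / 9 * ‖X t - xs‖ ^ 2 + 1 / 2 * ‖t • X' t + (2 * r / 3) • (X t - xs)‖ ^ 2) := by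
  have hpow : t ^ (2 * r / 3) = t ^ (2 * r / 3 - 2) * t ^ 2 := by
    rw [← Real.rpow_natCast, ← Real.rpow_add ht]
    norm_num
  rw [agmEnergy, hpow]
  ring

lemma rpow_mul_sub_le_agmEnergy (hr0 : 0 ≤ r) (hr3 : r ≤ 3) {t : ℝ} (ht : 0 < t) :
    t ^ (2 * r / 3) * (f (X t) - f xs) ≤ agmEnergy f r xs X X' t := by
  have hc : 0 ≤ r * (3 - r) / 9 := by have := sub_nonneg.2 hr3; positivity
  have h₁ : 0 ≤ r * (3 - r) / 9 * t ^ (2 * r / 3 - 2) * ‖X t - xs‖ ^ 2 := by positivity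
  have h₂ : 0 ≤ 1 / 2 * t ^ (2 * r / 3 - 2) * ‖t • X' t + (2 * r / 3) • (X t - xs)‖ ^ 2 := by
    positivity
  rw [agmEnergy]
  linarith

lemma hasDerivAt_agmEnergy [CompleteSpace E] {s : ℝ} (hs : 0 < s) (hgrad : HasGradientAt f (g (X s)) (X s))
    (hX : HasDerivAt X (X' s) s) (hX' : HasDerivAt X' (X'' s) s)
    (hode : X'' s + (r / s) • X' s + g (X s) = 0) :
    HasDerivAt (agmEnergy f r xs X X') (s ^ (2 * r / 3 - 3) * (2 * r / 3 * s ^ 2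
      * (f (X s) - f xs - ⟪X s - xs, g (X s)⟫) - 2 * r * (3 - r) * (3 + r) / 27 * ‖X s - xs‖ ^ 2)) s := by
  have hW := hasDerivAt_smul_add_smul_sub_of_ode (a := 2 * r / 3) (xs := xs) hs.ne' hX hX' hode
  have hbracket := (((hasDerivAt_pow 2 s).mul ((hgrad.comp_hasDerivAt hX).sub_const (f xs))).add
    ((hX.sub_const xs).norm_sq.const_mul (r * (3 - r) / 9))).add (hW.norm_sq.const_mul (1 / 2))
  refine ((hasDerivAt_rpow_mul (β := 2 * r / 3 - 2) hs hbracket).congr_of_eventuallyEq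
    ((eventually_gt_nhds hs).mono fun u hu => agmEnergy_eq_rpow_mul hu)).congr_deriv ?_
  rw [show 2 * r / 3 - 2 - 1 = 2 * r / 3 - 3 by ring]
  congr 1
  convert agm_energy_deriv_identity r s (f (X s) - f xs) (X s - xs) (X' s) (g (X s)) using 5 <;>
  norm_num

lemma agmEnergy_antitoneOn [CompleteSpace E] (hr0 : 0 ≤ r) (hr3 : r ≤ 3) {t₀ : ℝ} (ht₀ : 0 < t₀)
    (hgrad : ∀ x, HasGradientAt f (g x) x) (hconv : ∀ x, 0 ≤ f xs - f x - ⟪g x, xs - x⟫)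
    (hX : ∀ t ∈ Ici t₀, HasDerivAt X (X' t) t) (hX' : ∀ t ∈ Ici t₀, HasDerivAt X' (X'' t) t)
    (hode : ∀ t ∈ Ici t₀, X'' t + (r / t) • X' t + g (X t) = 0) :
    AntitoneOn (agmEnergy f r xs X X') (Ici t₀) := by
  have hderiv (t : ℝ) (ht : t ∈ Ici t₀) := hasDerivAt_agmEnergy (xs := xs) (ht₀.trans_le ht)
    (hgrad (X t)) (hX t ht) (hX' t ht) (hode t ht)
  refine antitoneOn_of_hasDerivWithinAt_nonpos (convex_Ici t₀)
    (fun t ht => (hderiv t ht).continuousAt.continuousWithinAt)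
    (fun t ht => (hderiv t (interior_subset ht)).hasDerivWithinAt) fun t ht => ?_
  have ht : 0 < t := ht₀.trans_le (interior_subset ht)
  have hgap : f (X t) - f xs - ⟪X t - xs, g (X t)⟫ ≤ 0 := by
    have := hconv (X t)
    rw [← neg_sub (X t) xs, inner_neg_right, real_inner_comm] at this
    linarith
  have hdrift : 2 * r / 3 * t ^ 2 * (f (X t) - f xs - ⟪X t - xs, g (X t)⟫) ≤ 0 :=
    mul_nonpos_of_nonneg_of_nonpos (by positivity) hgap
  have hdamping : 0 ≤ 2 * r * (3 - r) * (3 + r) / 27 * ‖X t - xs‖ ^ 2 := by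
    have := sub_nonneg.2 hr3
    positivity
  exact mul_nonpos_of_nonneg_of_nonpos (by positivity) (by linarith)

end

theorem agm_ode_rate_r_lt3_general
    {E : Type*} [NormedAddCommGroup E] [InnerProductSpace ℝ E] [CompleteSpace E]
    (f : E → ℝ) (g : E → E)
    (hgrad : ∀ x, HasGradientAt f (g x) x)
    (hconv : ∀ x y, 0 ≤ f x - f y - ⟪g y, x - y⟫)
    (r : ℝ) (hr0 : 0 ≤ r) (hr3 : r < 3)
    (t₀ : ℝ) (ht₀ : 0 < t₀)
    (X X' X'' : ℝ → E)
    (hX' : ∀ t ∈ Set.Ici t₀, HasDerivAt X (X' t) t)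
    (hX'' : ∀ t ∈ Set.Ici t₀, HasDerivAt X' (X'' t) t)
    (hODE : ∀ t ∈ Set.Ici t₀, X'' t + (r / t) • X' t + g (X t) = 0)
    (Xs : E) :
    ∀ t ≥ t₀,
      f (X t) - f Xs ≤
        (t₀ ^ (2 * r / 3) * (f (X t₀) - f Xs)
          + (r * (3 - r) / 9) * t₀ ^ (2 * r / 3 - 2) * ‖X t₀ - Xs‖ ^ 2
          + (1 / 2) * t₀ ^ (2 * r / 3 - 2)
            * ‖t₀ • X' t₀ + (2 * r / 3) • (X t₀ - Xs)‖ ^ 2)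
        / t ^ (2 * r / 3) := by
  intro t ht
  have ht' : 0 < t := ht₀.trans_le ht
  have hanti := agmEnergy_antitoneOn hr0 hr3.le ht₀ hgrad (hconv Xs) hX' hX'' hODE
  rw [le_div_iff₀ (by positivity), mul_comm]
  calc t ^ (2 * r / 3) * (f (X t) - f Xs)
      ≤ agmEnergy f r Xs X X' t := rpow_mul_sub_le_agmEnergy hr0 hr3.le ht'
    _ ≤ agmEnergy f r Xs X X' t₀ := hanti self_mem_Ici ht ht

theorem agm_ode_rate_r_lt3
    {E : Type*} [NormedAddCommGroup E] [InnerProductSpace ℝ E] [CompleteSpace E]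
    (f : E → ℝ) (g : E → E)
    (hgrad : ∀ x, HasGradientAt f (g x) x)
    (hconv : ∀ x y, 0 ≤ f x - f y - ⟪g y, x - y⟫)
    (r : ℝ) (hr0 : 0 ≤ r) (hr3 : r < 3)
    (t₀ : ℝ) (ht₀ : 0 < t₀)
    (X X' X'' : ℝ → E)
    (hX' : ∀ t ∈ Set.Ici t₀, HasDerivAt X (X' t) t)
    (hX'' : ∀ t ∈ Set.Ici t₀, HasDerivAt X' (X'' t) t)
    (hODE : ∀ t ∈ Set.Ici t₀, X'' t + (r / t) • X' t + g (X t) = 0)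
    (Xs : E) (hmin : ∀ x, f Xs ≤ f x) :
    ∀ t ≥ t₀,
      f (X t) - f Xs ≤
        (t₀ ^ (2 * r / 3) * (f (X t₀) - f Xs)
          + (r * (3 - r) / 9) * t₀ ^ (2 * r / 3 - 2) * ‖X t₀ - Xs‖ ^ 2
          + (1 / 2) * t₀ ^ (2 * r / 3 - 2)
            * ‖t₀ • X' t₀ + (2 * r / 3) • (X t₀ - Xs)‖ ^ 2)
        / t ^ (2 * r / 3) :=
  agm_ode_rate_r_lt3_general f g hgrad hconv r hr0 hr3 t₀ ht₀ X X' X'' hX' hX'' hODE Xs
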